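/- arXiv:1110.1269 — 4 statements merged into one kernel-verified Lean document; each statement's English description precedes it below -/
import Mathlib

section
/- Let S : [0,∞) → ℂ satisfy ∫₀^∞ |S(v)| dv < ∞. Then for every x ∈ (0,∞), the improper integral ∫₀^∞ e^{-ixt} (∫₀^∞ e^{-vt} S(v) dv) dt converges and equals ∫₀^∞ S(v)/(ix + v) dv. -/
/-!
Write `a = i x`. For `t > 0` the factor `e^{-a t}` can be moved inside the Laplace transform,
giving the kernel `e^{-(a + v) t}`, and since `Re (a + v) ≥ 0` everything is dominated by `|S v|`.
Fubini on `(0, N] × (0, ∞)` and integrating the exponential in `t` turn the truncated integral into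
`∫₀^∞ S v (1 - e^{-(a + v) N}) / (a + v) dv`. The bracket is bounded by `2` and tends to `1` for
`v > 0`, while `|a + v| ≥ |a|`, so dominated convergence gives the limit `∫₀^∞ S v / (a + v) dv`.
-/

open MeasureTheory Set Filter Complex intervalIntegral

lemma norm_cexp_neg_mul_le_one {w : ℂ} (hw : 0 ≤ w.re) {t : ℝ} (ht : 0 ≤ t) :
    ‖cexp (-(w * t))‖ ≤ 1 := by
  rw [norm_exp, Real.exp_le_one_iff]
  simpa [mul_re] using mul_nonneg hw ht

lemma re_add_ofReal_nonneg {a : ℂ} (ha : 0 ≤ a.re) {v : ℝ} (hv : 0 ≤ v) : 0 ≤ (a + v).re := by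
  simpa using add_nonneg ha hv

lemma norm_le_norm_add_ofReal {a : ℂ} (ha : 0 ≤ a.re) {v : ℝ} (hv : 0 ≤ v) : ‖a‖ ≤ ‖a + v‖ := by
  rw [← sq_le_sq₀ (norm_nonneg _) (norm_nonneg _), Complex.sq_norm, Complex.sq_norm,
    normSq_apply, normSq_apply]
  simp only [add_re, ofReal_re, add_im, ofReal_im, add_zero]
  nlinarith

lemma add_ofReal_ne_zero {a : ℂ} (ha : 0 ≤ a.re) (ha0 : a ≠ 0) {v : ℝ} (hv : 0 ≤ v) :
    a + v ≠ 0 :=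
  norm_pos_iff.1 ((norm_pos_iff.2 ha0).trans_le (norm_le_norm_add_ofReal ha hv))

lemma integral_cexp_neg_mul {w : ℂ} (hw : w ≠ 0) (N : ℝ) :
    ∫ t in (0 : ℝ)..N, cexp (-(w * t)) = (1 - cexp (-(w * N))) / w := by
  simp_rw [← neg_mul]
  rw [integral_exp_mul_complex (neg_ne_zero.2 hw)]
  simp only [ofReal_zero, mul_zero, exp_zero, div_neg]
  ring

section Laplace

variable {S : ℝ → ℂ} {a : ℂ}

lemma cexp_mul_laplace_eq (t : ℝ) :
    cexp (-(a * t)) * ∫ v in Ioi (0 : ℝ), cexp (-(v * t : ℝ)) * S v =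
      ∫ v in Ioi (0 : ℝ), cexp (-((a + v) * t)) * S v := by
  rw [← MeasureTheory.integral_const_mul]
  refine integral_congr_ae (.of_forall fun v => ?_)
  dsimp only
  rw [← mul_assoc, ← exp_add]
  push_cast
  ring_nf

lemma integrable_cexp_mul_prod (hS : IntegrableOn S (Ioi 0)) (ha : 0 ≤ a.re) (N : ℝ) :
    Integrable (fun p : ℝ × ℝ => cexp (-((a + p.2) * p.1)) * S p.2)
      ((volume.restrict (Ioc 0 N)).prod (volume.restrict (Ioi 0))) := by
  have hS' : Integrable (fun p : ℝ × ℝ => S p.2)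
      ((volume.restrict (Ioc 0 N)).prod (volume.restrict (Ioi 0))) := by
    simpa using (integrable_const (1 : ℂ)).mul_prod hS
  refine hS'.norm.mono' ((Continuous.aestronglyMeasurable (by fun_prop)).mul
    hS'.aestronglyMeasurable) ?_
  have hmem : ∀ᵐ p : ℝ × ℝ ∂((volume.restrict (Ioc 0 N)).prod (volume.restrict (Ioi 0))),
      p ∈ Ioc (0 : ℝ) N ×ˢ Ioi (0 : ℝ) := by
    rw [Measure.prod_restrict]
    exact ae_restrict_mem (measurableSet_Ioc.prod measurableSet_Ioi)
  filter_upwards [hmem] with p ⟨⟨ht, _⟩, hv⟩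
  rw [norm_mul]
  exact mul_le_of_le_one_left (norm_nonneg _)
    (norm_cexp_neg_mul_le_one (re_add_ofReal_nonneg ha (le_of_lt hv)) ht.le)

lemma integral_cexp_mul_laplace_eq (hS : IntegrableOn S (Ioi 0)) (ha : 0 ≤ a.re) (ha0 : a ≠ 0)
    {N : ℝ} (hN : 0 ≤ N) :
    ∫ t in (0 : ℝ)..N, cexp (-(a * t)) * ∫ v in Ioi (0 : ℝ), cexp (-(v * t : ℝ)) * S v =
      ∫ v in Ioi (0 : ℝ), S v * (1 - cexp (-((a + v) * N))) / (a + v) := by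
  simp_rw [cexp_mul_laplace_eq, integral_of_le hN]
  rw [integral_integral_swap (integrable_cexp_mul_prod hS ha N)]
  refine setIntegral_congr_fun measurableSet_Ioi fun v hv => ?_
  rw [MeasureTheory.integral_mul_const, ← integral_of_le hN,
    integral_cexp_neg_mul (add_ofReal_ne_zero ha ha0 (le_of_lt hv))]
  ring

lemma norm_one_sub_cexp_neg_mul_le_two {w : ℂ} (hw : 0 ≤ w.re) {N : ℝ} (hN : 0 ≤ N) :
    ‖1 - cexp (-(w * N))‖ ≤ 2 :=
  calc ‖1 - cexp (-(w * N))‖ ≤ ‖(1 : ℂ)‖ + ‖cexp (-(w * N))‖ := norm_sub_le _ _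
    _ ≤ 1 + 1 := by rw [norm_one]; gcongr; exact norm_cexp_neg_mul_le_one hw hN
    _ = 2 := by norm_num

lemma tendsto_cexp_neg_mul_atTop {w : ℂ} (hw : 0 < w.re) :
    Tendsto (fun N : ℝ => cexp (-(w * N))) atTop (nhds 0) := by
  rw [tendsto_zero_iff_norm_tendsto_zero]
  have hlin : Tendsto (fun N : ℝ => -(w.re * N)) atTop atBot :=
    tendsto_neg_atTop_atBot.comp (tendsto_id.const_mul_atTop hw)
  refine (Real.tendsto_exp_atBot.comp hlin).congr fun N => ?_
  simp [norm_exp, mul_re]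

theorem tendsto_integral_cexp_mul_laplace (hS : IntegrableOn S (Ioi 0)) (ha : 0 ≤ a.re)
    (ha0 : a ≠ 0) :
    Tendsto (fun N : ℝ => ∫ t in (0 : ℝ)..N,
        cexp (-(a * t)) * ∫ v in Ioi (0 : ℝ), cexp (-(v * t : ℝ)) * S v) atTop
      (nhds (∫ v in Ioi (0 : ℝ), S v / (a + v))) := by
  have hlim : Tendsto (fun N : ℝ => ∫ v in Ioi (0 : ℝ), S v * (1 - cexp (-((a + v) * N))) / (a + v))
      atTop (nhds (∫ v in Ioi (0 : ℝ), S v / (a + v))) := by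
    refine tendsto_integral_filter_of_dominated_convergence (fun v => ‖S v‖ * (2 / ‖a‖))
      ?_ ?_ (hS.norm.mul_const _) ?_
    · refine .of_forall fun N => ?_
      have hcont : ContinuousOn (fun v : ℝ => (1 - cexp (-((a + v) * N))) / (a + v)) (Ioi 0) :=
        (by fun_prop : Continuous fun v : ℝ => 1 - cexp (-((a + v) * N))).continuousOn.div
          (by fun_prop) fun v hv => add_ofReal_ne_zero ha ha0 (le_of_lt hv)
      simp only [mul_div_assoc]
      exact hS.aestronglyMeasurable.mul (hcont.aestronglyMeasurable measurableSet_Ioi)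
    · filter_upwards [eventually_ge_atTop 0] with N hN
      filter_upwards [ae_restrict_mem measurableSet_Ioi] with v hv
      rw [norm_div, norm_mul, mul_div_assoc]
      gcongr
      · exact norm_one_sub_cexp_neg_mul_le_two (re_add_ofReal_nonneg ha (le_of_lt hv)) hN
      exact norm_le_norm_add_ofReal ha (le_of_lt hv)
    · filter_upwards [ae_restrict_mem measurableSet_Ioi] with v hv
      have hre : 0 < (a + v).re := by simpa using add_pos_of_nonneg_of_pos ha hv
      simpa using (((tendsto_cexp_neg_mul_atTop hre).const_sub 1).const_mul (S v)).div_const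
        (a + v)
  refine hlim.congr' ?_
  filter_upwards [eventually_ge_atTop 0] with N hN
  exact (integral_cexp_mul_laplace_eq hS ha ha0 hN).symm

end Laplace

/-- For S integrable on [0,∞) and x>0, the improper integral
∫₀^∞ e^{-ixt}(∫₀^∞ e^{-vt}S(v)dv)dt converges and equals ∫₀^∞ S(v)/(ix+v)dv. -/
theorem stmt_3 (S : ℝ → ℂ) (hS : IntegrableOn S (Ioi 0)) :
    ∀ x : ℝ, 0 < x →
      Tendsto (fun N : ℝ => ∫ t in (0:ℝ)..N, Complex.exp (-(Complex.I * x * t)) *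
          ∫ v in Ioi (0:ℝ), Complex.exp (-(v * t : ℝ)) * S v) atTop
        (nhds (∫ v in Ioi (0:ℝ), S v / (Complex.I * x + v))) := by
  intro x hx
  refine tendsto_integral_cexp_mul_laplace hS (by simp) ?_
  exact mul_ne_zero I_ne_zero (ofReal_ne_zero.2 hx.ne')
end

section
/- Let S : [0,∞) → ℂ satisfy ∫₀^∞ |S(v)| dv < ∞. Define k₊(p) = (1/i)·∫₀^∞ S(v)·(1/(p - iv)) dv. Then k₊·i, i.e. the function p ↦ ∫₀^∞ S(v)/(p - iv) dv, is holomorphic on ℂ \ i[0,∞); in particular it is holomorphic on the region {p : -π < arg p < 0} ∪ {p : 0 < arg p < π/2} ∪ (0,∞) and agrees with K₊(p) = ∫₀^∞ e^{-pt}(∫₀^∞ e^{ivt}S(v)dv)dt on {Re p > 0}. -/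
open MeasureTheory Set Filter Complex

/-! The Cauchy-type integral `∫ S v / (p - i v) dv` is holomorphic off the closed ray `i[0,∞)`
carrying the poles, by differentiation under the integral sign: near a point at distance `> r`
from the ray the integrand and its `p`-derivative are dominated by `|S| / r` and `|S| / r²`.
For `Re p > 0` one has `1 / (p - i v) = ∫₀^∞ e^{-(p - i v) t} dt`, and since
`|e^{-pt} e^{ivt} S(v)| = e^{-t Re p} |S(v)|` is integrable on the product, Fubini swaps the
`v`- and `t`-integrals. -/

lemma IsClosed.exists_pos_forall_le_dist_of_notMem {E : Type*} [PseudoMetricSpace E]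
    {C : Set E} (hC : IsClosed C) {x : E} (hx : x ∉ C) :
    ∃ r > 0, ∀ y ∈ Metric.ball x r, ∀ c ∈ C, r ≤ dist y c := by
  obtain ⟨ε, hε, hball⟩ := Metric.isOpen_iff.1 hC.isOpen_compl x hx
  refine ⟨ε / 2, half_pos hε, fun y hy c hc => ?_⟩
  have hxc : ε ≤ dist x c := not_lt.1 fun h => hball (Metric.mem_ball'.2 h) hc
  have hxy : dist x y < ε / 2 := Metric.mem_ball'.1 hy
  linarith [dist_triangle x y c]

theorem differentiableOn_integral_div_sub {α : Type*} [MeasurableSpace α] {μ : Measure α}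
    {f g : α → ℂ} (hf : Integrable f μ) (hg : AEMeasurable g μ)
    {C : Set ℂ} (hC : IsClosed C) (hgC : ∀ᵐ a ∂μ, g a ∈ C) :
    DifferentiableOn ℂ (fun z => ∫ a, f a / (z - g a) ∂μ) Cᶜ := by
  intro z₀ hz₀
  obtain ⟨r, hr, hfar⟩ := hC.exists_pos_forall_le_dist_of_notMem hz₀
  have hmeas : ∀ z, AEStronglyMeasurable (fun a => f a / (z - g a)) μ := fun z =>
    (hf.aemeasurable.div (aemeasurable_const.sub hg)).aestronglyMeasurable
  have hle : ∀ᵐ a ∂μ, ∀ z ∈ Metric.ball z₀ r, r ≤ ‖z - g a‖ := by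
    filter_upwards [hgC] with a ha z hz
    simpa [dist_eq_norm] using hfar z hz (g a) ha
  have hint : Integrable (fun a => f a / (z₀ - g a)) μ := by
    refine (hf.norm.div_const r).mono' (hmeas z₀) ?_
    filter_upwards [hle] with a ha
    rw [norm_div]
    gcongr
    exact ha z₀ (Metric.mem_ball_self hr)
  have hbound : ∀ᵐ a ∂μ, ∀ z ∈ Metric.ball z₀ r,
      ‖f a * (-1 / (z - g a) ^ 2)‖ ≤ ‖f a‖ / r ^ 2 := by
    filter_upwards [hle] with a ha z hz
    rw [norm_mul, norm_div, norm_neg, norm_one, norm_pow, mul_one_div]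
    gcongr
    exact ha z hz
  have hderiv : ∀ᵐ a ∂μ, ∀ z ∈ Metric.ball z₀ r,
      HasDerivAt (fun w => f a / (w - g a)) (f a * (-1 / (z - g a) ^ 2)) z := by
    filter_upwards [hle] with a ha z hz
    have hne : z - g a ≠ 0 := norm_pos_iff.1 (hr.trans_le (ha z hz))
    simpa only [div_eq_mul_inv, Pi.inv_apply] using
      (((hasDerivAt_id' z).sub_const (g a)).inv hne).const_mul (f a)
  have hmeas_deriv : AEStronglyMeasurable (fun a => f a * (-1 / (z₀ - g a) ^ 2)) μ :=
    (hf.aemeasurable.mul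
      (aemeasurable_const.div ((aemeasurable_const.sub hg).pow_const 2))).aestronglyMeasurable
  exact (hasDerivAt_integral_of_dominated_loc_of_deriv_le (Metric.ball_mem_nhds z₀ hr)
    (Eventually.of_forall hmeas) hint hmeas_deriv hbound (hf.norm.div_const _)
    hderiv).2.differentiableAt.differentiableWithinAt

lemma integral_exp_neg_mul_mul_exp_I_mul_Ioi {p : ℂ} (hp : 0 < p.re) (v : ℝ) :
    ∫ t in Ioi (0:ℝ), cexp (-(p * t)) * cexp (I * v * t) = (p - I * v)⁻¹ := by
  have hre : (I * v - p).re < 0 := by simpa using hp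
  simp_rw [← Complex.exp_add, show ∀ t : ℂ, -(p * t) + I * v * t = (I * v - p) * t
    from fun t => by ring]
  rw [integral_exp_mul_complex_Ioi hre, ofReal_zero, mul_zero, Complex.exp_zero, ← neg_sub p,
    neg_div_neg_eq, one_div]

theorem integral_div_sub_I_mul_eq_integral_exp_mul_integral {μ : Measure ℝ} [SFinite μ]
    {S : ℝ → ℂ} (hS : Integrable S μ) {p : ℂ} (hp : 0 < p.re) :
    ∫ v, S v / (p - I * v) ∂μ =
      ∫ t in Ioi (0:ℝ), cexp (-(p * t)) * ∫ v, cexp (I * v * t) * S v ∂μ := by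
  set F : ℝ → ℝ → ℂ := fun t v => cexp (-(p * t)) * cexp (I * v * t) * S v
  have hF_meas : AEStronglyMeasurable (Function.uncurry F)
      ((volume.restrict (Ioi 0)).prod μ) :=
    (Continuous.aestronglyMeasurable (by fun_prop)).mul hS.aestronglyMeasurable.comp_snd
  have hF_int : Integrable (Function.uncurry F) ((volume.restrict (Ioi 0)).prod μ) := by
    refine ((exp_neg_integrableOn_Ioi 0 hp).mul_prod hS.norm).mono' hF_meas
      (Eventually.of_forall fun ⟨t, v⟩ => le_of_eq ?_)
    simp [F, Complex.norm_exp]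
  calc ∫ v, S v / (p - I * v) ∂μ = ∫ v, (∫ t in Ioi (0:ℝ), F t v) ∂μ := by
        congr 1 with v
        simp only [F, integral_mul_const, integral_exp_neg_mul_mul_exp_I_mul_Ioi hp,
          div_eq_inv_mul]
    _ = ∫ t in Ioi (0:ℝ), (∫ v, F t v ∂μ) := (integral_integral_swap hF_int).symm
    _ = ∫ t in Ioi (0:ℝ), cexp (-(p * t)) * ∫ v, cexp (I * v * t) * S v ∂μ := by
        simp only [F, mul_assoc, integral_const_mul]

/-- For S integrable on [0,∞), the function p ↦ ∫₀^∞ S(v)/(p-iv)dv is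
holomorphic on ℂ \ i[0,∞) and agrees with K₊(p)=∫₀^∞ e^{-pt}(∫₀^∞ e^{ivt}S(v)dv)dt
on {Re p > 0}. -/
theorem stmt_9 (S : ℝ → ℂ) (hS : IntegrableOn S (Ioi 0)) :
    DifferentiableOn ℂ
      (fun p : ℂ => ∫ v in Ioi (0:ℝ), S v / (p - Complex.I * v))
      {p : ℂ | ∀ v : ℝ, 0 ≤ v → p ≠ Complex.I * v} ∧
    ∀ p : ℂ, 0 < p.re →
      (∫ v in Ioi (0:ℝ), S v / (p - Complex.I * v))
        = ∫ t in Ioi (0:ℝ), Complex.exp (-(p * t)) *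
            ∫ v in Ioi (0:ℝ), Complex.exp (Complex.I * v * t) * S v := by
  refine ⟨?_, fun p hp => integral_div_sub_I_mul_eq_integral_exp_mul_integral hS hp⟩
  set ray : Set ℂ := re ⁻¹' {0} ∩ im ⁻¹' Ici 0
  have hray : IsClosed ray :=
    (isClosed_singleton.preimage continuous_re).inter (isClosed_Ici.preimage continuous_im)
  have hmem : ∀ᵐ v : ℝ ∂volume.restrict (Ioi 0), I * (v : ℂ) ∈ ray := by
    filter_upwards [ae_restrict_mem measurableSet_Ioi] with v hv
    simp [ray, (mem_Ioi.1 hv).le]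
  refine (differentiableOn_integral_div_sub hS (by fun_prop) hray hmem).mono ?_
  rintro p hp ⟨hre, him⟩
  exact hp p.im him (Complex.ext (by simpa using hre) (by simp))
end

section
/- Let S : [0,∞) → ℂ be continuous with compact support in (0,∞). Define K(x) = ∫₀^∞ S(v)/(x - iv) dv for x real. If ∫₀^∞ S(v) dv = 0, then ∫_{-∞}^∞ |K(x)| dx < ∞. -/
open MeasureTheory Set Filter Complex

/-- Proposition 2: For S continuous with compact support in (0,∞) and
∫₀^∞ S(v)dv = 0, the function K(x)=∫₀^∞ S(v)/(x-iv)dv is integrable on ℝ. -/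
theorem stmt_13 (S : ℝ → ℂ) (hScont : Continuous S) (hSsupp : HasCompactSupport S)
    (hSsupp' : tsupport S ⊆ Ioi 0)
    (hmean : (∫ v in Ioi (0:ℝ), S v) = 0) :
    Integrable (fun x : ℝ => ∫ v in Ioi (0:ℝ), S v / ((x : ℂ) - Complex.I * v)) := by
  by_cases hne : (tsupport S).Nonempty
  · -- main case
    have hKcpt : IsCompact (tsupport S) := hSsupp
    set a := sInf (tsupport S) with ha_def
    have ha_mem : a ∈ tsupport S := hKcpt.sInf_mem hne
    have ha_pos : (0:ℝ) < a := hSsupp' ha_mem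
    have ha_le : ∀ v : ℝ, S v ≠ 0 → a ≤ v := fun v hv =>
      csInf_le hKcpt.bddBelow (subset_tsupport S hv)
    -- basic norm facts
    have hden_norm : ∀ (x v : ℝ), 0 < v → v ≤ ‖(x : ℂ) - Complex.I * v‖ := by
      intro x v hv
      have him : ((x : ℂ) - Complex.I * v).im = -v := by simp
      calc v = |((x : ℂ) - Complex.I * v).im| := by rw [him]; rw [abs_neg, abs_of_pos hv]
        _ ≤ ‖(x : ℂ) - Complex.I * v‖ := Complex.abs_im_le_norm _
    have hden_norm' : ∀ (x v : ℝ), |x| ≤ ‖(x : ℂ) - Complex.I * v‖ := by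
      intro x v
      have hre : ((x : ℂ) - Complex.I * v).re = x := by simp
      calc |x| = |((x : ℂ) - Complex.I * v).re| := by rw [hre]
        _ ≤ ‖(x : ℂ) - Complex.I * v‖ := Complex.abs_re_le_norm _
    have hden_ne : ∀ (x v : ℝ), 0 < v → (x : ℂ) - Complex.I * v ≠ 0 := by
      intro x v hv h
      have := hden_norm x v hv
      rw [h] at this
      simp at this
      linarith
    -- pointwise bound ‖S v/(x-iv)‖ ≤ ‖S v‖/a
    have hbound1 : ∀ (x v : ℝ), 0 < v → ‖S v / ((x : ℂ) - Complex.I * v)‖ ≤ ‖S v‖ / a := by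
      intro x v hv
      by_cases hSv : S v = 0
      · simp [hSv]
      · have hav : a ≤ v := ha_le v hSv
        rw [norm_div]
        apply div_le_div_of_nonneg_left (norm_nonneg _) ha_pos
        exact le_trans hav (hden_norm x v hv)
    -- integrability facts
    have hS_int : Integrable S := hScont.integrable_of_hasCompactSupport hSsupp
    have hbd_int : IntegrableOn (fun v => ‖S v‖ / a) (Ioi 0) :=
      (hS_int.norm.div_const a).integrableOn
    have hmeas : ∀ x : ℝ, AEStronglyMeasurable (fun v => S v / ((x : ℂ) - Complex.I * v))
        (volume.restrict (Ioi 0)) := by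
      intro x
      exact ((hScont.measurable.div
        (measurable_const.sub (Complex.measurable_ofReal.const_mul Complex.I))).aestronglyMeasurable).restrict
    have hint : ∀ x : ℝ, IntegrableOn (fun v => S v / ((x : ℂ) - Complex.I * v)) (Ioi 0) := by
      intro x
      refine Integrable.mono' hbd_int (hmeas x) ?_
      filter_upwards [ae_restrict_mem measurableSet_Ioi] with v hv
      exact hbound1 x v hv
    -- continuity of K
    have hcont : Continuous (fun x : ℝ => ∫ v in Ioi (0:ℝ), S v / ((x : ℂ) - Complex.I * v)) := by
      apply continuous_of_dominated hmeas
      · intro x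
        filter_upwards [ae_restrict_mem measurableSet_Ioi] with v hv
        exact hbound1 x v hv
      · exact hbd_int
      · filter_upwards [ae_restrict_mem measurableSet_Ioi] with v hv
        exact continuous_const.div (by continuity) (fun x => hden_ne x v hv)
    -- constants
    set M1 : ℝ := ∫ v in Ioi (0:ℝ), ‖S v‖ / a with hM1_def
    set M2 : ℝ := ∫ v in Ioi (0:ℝ), ‖S v‖ * v with hM2_def
    have hM2int : IntegrableOn (fun v => ‖S v‖ * v) (Ioi 0) := by
      have h : Integrable (fun v : ℝ => ‖S v‖ * v) := Continuous.integrable_of_hasCompactSupport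
        (hScont.norm.mul continuous_id) (hSsupp.norm.mul_right)
      exact h.integrableOn
    have hM1nn : 0 ≤ M1 := setIntegral_nonneg measurableSet_Ioi fun v _ =>
      div_nonneg (norm_nonneg _) ha_pos.le
    have hM2nn : 0 ≤ M2 := setIntegral_nonneg measurableSet_Ioi fun v hv =>
      mul_nonneg (norm_nonneg _) (le_of_lt hv)
    -- bound 1: ‖K x‖ ≤ M1
    have hKb1 : ∀ x : ℝ, ‖∫ v in Ioi (0:ℝ), S v / ((x : ℂ) - Complex.I * v)‖ ≤ M1 := by
      intro x
      apply norm_integral_le_of_norm_le hbd_int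
      filter_upwards [ae_restrict_mem measurableSet_Ioi] with v hv
      exact hbound1 x v hv
    -- bound 2: x^2 * ‖K x‖ ≤ M2
    have hKb2 : ∀ x : ℝ, x^2 * ‖∫ v in Ioi (0:ℝ), S v / ((x : ℂ) - Complex.I * v)‖ ≤ M2 := by
      intro x
      rcases eq_or_ne x 0 with rfl | hx
      · simpa using hM2nn
      · have hx2 : (0:ℝ) < x^2 := by positivity
        have hxabs : (0:ℝ) < |x| := abs_pos.mpr hx
        have hxC : (x : ℂ) ≠ 0 := by exact_mod_cast hx
        -- rewrite K x using mean zero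
        have hdiv_int : IntegrableOn (fun v => S v / (x : ℂ)) (Ioi 0) :=
          (hS_int.integrableOn.div_const _)
        have hKeq : (∫ v in Ioi (0:ℝ), S v / ((x : ℂ) - Complex.I * v))
            = ∫ v in Ioi (0:ℝ), (S v / ((x : ℂ) - Complex.I * v) - S v / (x:ℂ)) := by
          rw [integral_sub (hint x) hdiv_int, integral_div, hmean]
          simp
        rw [hKeq]
        have hb : ∀ v ∈ Ioi (0:ℝ),
            ‖S v / ((x : ℂ) - Complex.I * v) - S v / (x:ℂ)‖ ≤ (‖S v‖ * v) / x^2 := by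
          intro v hv
          have hv' : (0:ℝ) < v := hv
          have hd := hden_ne x v hv'
          have heq : S v / ((x : ℂ) - Complex.I * v) - S v / (x:ℂ)
              = S v * (Complex.I * v) / (((x : ℂ) - Complex.I * v) * (x:ℂ)) := by
            field_simp
            ring
          rw [heq, norm_div, norm_mul, norm_mul, norm_mul]
          have h1 : ‖(Complex.I : ℂ)‖ = 1 := by simp
          have h2 : ‖((v:ℝ) : ℂ)‖ = v := by
            rw [Complex.norm_real, Real.norm_eq_abs, abs_of_pos hv']
          have h3 : ‖((x:ℝ) : ℂ)‖ = |x| := by rw [Complex.norm_real, Real.norm_eq_abs]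
          rw [h1, h2, h3, one_mul]
          have hden_ge : x^2 ≤ ‖(x : ℂ) - Complex.I * v‖ * |x| := by
            nlinarith [hden_norm' x v, abs_nonneg x, _root_.sq_abs x]
          exact div_le_div_of_nonneg_left (mul_nonneg (norm_nonneg _) hv'.le) hx2 hden_ge
        have := norm_integral_le_of_norm_le (g := fun v => (‖S v‖ * v) / x^2)
          (hM2int.div_const _) (by
            filter_upwards [ae_restrict_mem measurableSet_Ioi] with v hv
            exact hb v hv)
        calc x^2 * ‖∫ v in Ioi (0:ℝ), (S v / ((x : ℂ) - Complex.I * v) - S v / (x:ℂ))‖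
            ≤ x^2 * ∫ v in Ioi (0:ℝ), (‖S v‖ * v) / x^2 :=
              mul_le_mul_of_nonneg_left this (le_of_lt hx2)
          _ = x^2 * (M2 / x^2) := by rw [integral_div]
          _ = M2 := by field_simp
    -- conclude
    refine Integrable.mono' (g := fun x => (M1 + M2) * (1 + x^2)⁻¹)
      (integrable_inv_one_add_sq.const_mul _) hcont.aestronglyMeasurable ?_
    filter_upwards with x
    have h1 : (0:ℝ) < 1 + x^2 := by positivity
    have h2 : ‖∫ v in Ioi (0:ℝ), S v / ((x : ℂ) - Complex.I * v)‖ * (1 + x^2) ≤ M1 + M2 := by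
      calc ‖∫ v in Ioi (0:ℝ), S v / ((x : ℂ) - Complex.I * v)‖ * (1 + x^2)
          = ‖∫ v in Ioi (0:ℝ), S v / ((x : ℂ) - Complex.I * v)‖
            + x^2 * ‖∫ v in Ioi (0:ℝ), S v / ((x : ℂ) - Complex.I * v)‖ := by ring
        _ ≤ M1 + M2 := add_le_add (hKb1 x) (hKb2 x)
    calc ‖∫ v in Ioi (0:ℝ), S v / ((x : ℂ) - Complex.I * v)‖
        = ‖∫ v in Ioi (0:ℝ), S v / ((x : ℂ) - Complex.I * v)‖ * (1 + x^2) * (1 + x^2)⁻¹ := by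
          field_simp
      _ ≤ (M1 + M2) * (1 + x^2)⁻¹ :=
          mul_le_mul_of_nonneg_right h2 (inv_nonneg.mpr h1.le)
  · -- tsupport empty: S = 0
    have hS0 : ∀ v, S v = 0 := by
      intro v
      by_contra h
      exact hne ⟨v, subset_tsupport S h⟩
    have : (fun x : ℝ => ∫ v in Ioi (0:ℝ), S v / ((x : ℂ) - Complex.I * v))
        = fun _ => 0 := by
      funext x
      simp [hS0]
    rw [this]
    exact integrable_zero _ _ _
end

section
/- Let f : ℝ → ℂ be integrable with integrable Fourier transform, and suppose f(t) = 0 for t < 0, f is continuous on (0,∞), and f(t) → 0 as t → ∞. If g : (0,∞) → ℂ is continuous with g(t) → 0 at ∞ and the Laplace transforms agree, ∫₀^∞ e^{-st} f(t) dt = ∫₀^∞ e^{-st} g(t) dt for all s ∈ (0,∞), then f(t) = g(t) for all t ∈ (0,∞). -/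
/-!
Put `h = f - g` and `k t = e^{-t} h t`. The Laplace transform of `h` vanishes at every
`s = n + 1`, so the integrable function `k` on `(0, ∞)` has vanishing moments
`∫ e^{-nt} k t dt`. By Weierstrass approximation on `[0, 1]`, `∫ ψ (e^{-t}) k t dt = 0` for every
continuous `ψ`; taking `ψ x = φ (-log x)` for a test function `φ` supported in `(0, ∞)` shows that
`k`, hence `h`, vanishes almost everywhere on `(0, ∞)`. Continuity turns `f = g` a.e. into
`f = g` everywhere on `(0, ∞)`.
-/

open MeasureTheory Set Filter Complex
open scoped ContDiff Polynomial

section Moments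

variable {α E : Type*} [MeasurableSpace α] {μ : Measure α}
  [NormedAddCommGroup E] [NormedSpace ℝ E] {u : α → ℝ} {k : α → E}

theorem MeasureTheory.Integrable.continuous_comp_smul (hk : Integrable k μ)
    (hu : AEStronglyMeasurable u μ) (hu01 : ∀ᵐ x ∂μ, u x ∈ Icc (0 : ℝ) 1) {ψ : ℝ → ℝ}
    (hψ : Continuous ψ) : Integrable (fun x => ψ (u x) • k x) μ := by
  obtain ⟨C, hC⟩ := isCompact_Icc.exists_bound_of_continuousOn hψ.continuousOn
  exact hk.bdd_smul C (hψ.comp_aestronglyMeasurable hu) (hu01.mono fun x hx => hC _ hx)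

theorem integral_eval_smul_eq_zero_of_moments (hk : Integrable k μ)
    (hu : AEStronglyMeasurable u μ) (hu01 : ∀ᵐ x ∂μ, u x ∈ Icc (0 : ℝ) 1)
    (hmom : ∀ n : ℕ, ∫ x, u x ^ n • k x ∂μ = 0) (p : ℝ[X]) :
    ∫ x, p.eval (u x) • k x ∂μ = 0 := by
  induction p using Polynomial.induction_on' with
  | add p q hp hq =>
    simp only [Polynomial.eval_add, add_smul]
    rw [integral_add (hk.continuous_comp_smul hu hu01 p.continuous)
      (hk.continuous_comp_smul hu hu01 q.continuous), hp, hq, add_zero]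
  | monomial n a =>
    simp only [Polynomial.eval_monomial, mul_smul]
    rw [integral_smul, hmom, smul_zero]

theorem integral_comp_smul_eq_zero_of_moments (hk : Integrable k μ)
    (hu : AEStronglyMeasurable u μ) (hu01 : ∀ᵐ x ∂μ, u x ∈ Icc (0 : ℝ) 1)
    (hmom : ∀ n : ℕ, ∫ x, u x ^ n • k x ∂μ = 0) {ψ : ℝ → ℝ} (hψ : Continuous ψ) :
    ∫ x, ψ (u x) • k x ∂μ = 0 := by
  refine norm_le_zero_iff.1 (le_of_forall_pos_le_add fun ε hε => ?_)
  set C := ∫ x, ‖k x‖ ∂μ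
  have hC : 0 ≤ C := integral_nonneg fun _ => norm_nonneg _
  obtain ⟨p, hp⟩ := exists_polynomial_near_of_continuousOn 0 1 ψ hψ.continuousOn
    (ε / (C + 1)) (by positivity)
  calc ‖∫ x, ψ (u x) • k x ∂μ‖ = ‖∫ x, (ψ (u x) - p.eval (u x)) • k x ∂μ‖ := by
        simp only [sub_smul]
        rw [integral_sub (hk.continuous_comp_smul hu hu01 hψ)
          (hk.continuous_comp_smul hu hu01 p.continuous),
          integral_eval_smul_eq_zero_of_moments hk hu hu01 hmom, sub_zero]
    _ ≤ ∫ x, ε / (C + 1) * ‖k x‖ ∂μ := by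
        refine norm_integral_le_of_norm_le (hk.norm.const_mul _) (hu01.mono fun x hx => ?_)
        rw [norm_smul, Real.norm_eq_abs, abs_sub_comm]
        exact mul_le_mul_of_nonneg_right (hp _ hx).le (norm_nonneg _)
    _ = ε / (C + 1) * C := integral_const_mul _ _
    _ ≤ 0 + ε := by
        rw [zero_add, div_mul_eq_mul_div, div_le_iff₀ (by positivity)]
        nlinarith

end Moments

theorem HasCompactSupport.continuous_comp_neg_log {φ : ℝ → ℝ} (hφ : Continuous φ)
    (hsupp : HasCompactSupport φ) (h0 : φ 0 = 0) : Continuous fun x => φ (-Real.log x) := by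
  refine continuous_iff_continuousAt.2 fun x => ?_
  rcases eq_or_ne x 0 with rfl | hx
  · rw [← continuousWithinAt_compl_self, ContinuousWithinAt, Real.log_zero, neg_zero, h0]
    exact hsupp.is_zero_at_infty.comp ((tendsto_neg_atBot_atTop.comp
      Real.tendsto_log_nhdsNE_zero).mono_right atTop_le_cocompact)
  · exact hφ.continuousAt.comp (Real.continuousAt_log hx).neg

section Laplace

variable {E : Type*} [NormedAddCommGroup E] [NormedSpace ℝ E]

theorem ae_restrict_Ioi_eq_zero_of_moments [CompleteSpace E] {k : ℝ → E}
    (hk : IntegrableOn k (Ioi 0))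
    (hmom : ∀ n : ℕ, ∫ t in Ioi 0, Real.exp (-t) ^ n • k t = 0) :
    k =ᵐ[volume.restrict (Ioi 0)] 0 := by
  have htest : ∀ φ : ℝ → ℝ, ContDiff ℝ ∞ φ → HasCompactSupport φ → tsupport φ ⊆ Ioi 0 →
      ∫ t, φ t • k t = 0 := by
    intro φ hφ hsupp hsub
    have hφ0 : ∀ t ∉ Ioi (0 : ℝ), φ t = 0 := fun t ht =>
      image_eq_zero_of_notMem_tsupport fun h => ht (hsub h)
    rw [← setIntegral_eq_integral_of_forall_compl_eq_zero fun t ht => by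
      rw [hφ0 t ht, zero_smul]]
    have hu01 : ∀ᵐ t ∂volume.restrict (Ioi 0), Real.exp (-t) ∈ Icc (0 : ℝ) 1 :=
      (ae_restrict_mem measurableSet_Ioi).mono fun t ht =>
        ⟨(Real.exp_pos _).le, Real.exp_le_one_iff.2 (neg_nonpos.2 (le_of_lt ht))⟩
    simpa only [Real.log_exp, neg_neg] using integral_comp_smul_eq_zero_of_moments hk
      (by fun_prop) hu01 hmom
      (hsupp.continuous_comp_neg_log hφ.continuous (hφ0 0 self_notMem_Ioi))
  exact (ae_restrict_iff' measurableSet_Ioi).2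
    (isOpen_Ioi.ae_eq_zero_of_integral_contDiff_smul_eq_zero hk.locallyIntegrableOn htest)

theorem ae_restrict_Ioi_eq_zero_of_laplace_eq_zero [CompleteSpace E] {h : ℝ → E}
    (hint : ∀ s : ℝ, 0 < s → IntegrableOn (fun t => Real.exp (-(s * t)) • h t) (Ioi 0))
    (hzero : ∀ s : ℝ, 0 < s → ∫ t in Ioi 0, Real.exp (-(s * t)) • h t = 0) :
    h =ᵐ[volume.restrict (Ioi 0)] 0 := by
  have hk : IntegrableOn (fun t => Real.exp (-t) • h t) (Ioi 0) := by
    simpa only [one_mul] using hint 1 one_pos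
  have hmom : ∀ n : ℕ, ∫ t in Ioi 0, Real.exp (-t) ^ n • Real.exp (-t) • h t = 0 := by
    intro n
    have hexp : ∀ t : ℝ, Real.exp (-t) ^ n • Real.exp (-t) • h t
        = Real.exp (-((n + 1) * t)) • h t := by
      intro t
      rw [smul_smul, ← pow_succ, ← Real.exp_nat_mul]
      push_cast
      ring_nf
    simp only [hexp]
    exact hzero _ (by positivity)
  filter_upwards [ae_restrict_Ioi_eq_zero_of_moments hk hmom] with t ht
  exact (smul_eq_zero.1 ht).resolve_left (Real.exp_ne_zero _)

theorem ae_restrict_Ioi_eq_of_laplace_eq [CompleteSpace E] {f g : ℝ → E}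
    (hf : ∀ s : ℝ, 0 < s → IntegrableOn (fun t => Real.exp (-(s * t)) • f t) (Ioi 0))
    (hg : ∀ s : ℝ, 0 < s → IntegrableOn (fun t => Real.exp (-(s * t)) • g t) (Ioi 0))
    (heq : ∀ s : ℝ, 0 < s →
      ∫ t in Ioi 0, Real.exp (-(s * t)) • f t = ∫ t in Ioi 0, Real.exp (-(s * t)) • g t) :
    f =ᵐ[volume.restrict (Ioi 0)] g := by
  have hsub := ae_restrict_Ioi_eq_zero_of_laplace_eq_zero (h := f - g)
    (fun s hs => by
      simp only [Pi.sub_apply, smul_sub]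
      exact (hf s hs).sub (hg s hs))
    (fun s hs => by
      simp only [Pi.sub_apply, smul_sub]
      rw [integral_sub (hf s hs) (hg s hs), heq s hs, sub_self])
  filter_upwards [hsub] with t ht using sub_eq_zero.1 ht

theorem MeasureTheory.Integrable.integrableOn_exp_neg_mul_smul {f : ℝ → E} (hf : Integrable f)
    {s : ℝ} (hs : 0 ≤ s) : IntegrableOn (fun t => Real.exp (-(s * t)) • f t) (Ioi 0) := by
  refine hf.integrableOn.bdd_smul 1 (by fun_prop) ((ae_restrict_mem measurableSet_Ioi).mono
    fun t ht => ?_)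
  rw [Real.norm_of_nonneg (Real.exp_pos _).le, Real.exp_le_one_iff, neg_nonpos]
  exact mul_nonneg hs (le_of_lt ht)

end Laplace

theorem stmt_15_general (f g : ℝ → ℂ)
    (hfint : Integrable f)
    (hfcont : ContinuousOn f (Ioi 0))
    (hgcont : ContinuousOn g (Ioi 0))
    (hgint : ∀ s : ℝ, 0 < s →
      IntegrableOn (fun t : ℝ => Complex.exp (-(s * t : ℝ)) * g t) (Ioi 0))
    (heq : ∀ s : ℝ, 0 < s →
      (∫ t in Ioi (0:ℝ), Complex.exp (-(s * t : ℝ)) * f t)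
        = ∫ t in Ioi (0:ℝ), Complex.exp (-(s * t : ℝ)) * g t) :
    ∀ t : ℝ, 0 < t → f t = g t := by
  have hsmul : ∀ (u : ℝ → ℂ) (s : ℝ),
      (fun t : ℝ => Complex.exp (-(s * t : ℝ)) * u t) = fun t => Real.exp (-(s * t)) • u t := by
    intro u s
    funext t
    rw [Complex.real_smul, Complex.ofReal_exp, Complex.ofReal_neg]
  have hae : f =ᵐ[volume.restrict (Ioi 0)] g := ae_restrict_Ioi_eq_of_laplace_eq
    (fun s hs => hfint.integrableOn_exp_neg_mul_smul hs.le)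
    (fun s hs => hsmul g s ▸ hgint s hs)
    (fun s hs => by simpa only [hsmul] using heq s hs)
  exact fun t ht => Measure.eqOn_open_of_ae_eq hae isOpen_Ioi hfcont hgcont ht

/-- Uniqueness of the Laplace transform for continuous functions vanishing
at infinity: if f is integrable with integrable Fourier transform, vanishes on (-∞,0),
is continuous on (0,∞) with f → 0 at ∞, g is continuous on (0,∞) with g → 0 at ∞ and
absolutely convergent Laplace transform, and the Laplace transforms of f and g agree on
(0,∞), then f = g on (0,∞). -/
theorem stmt_15 (f g : ℝ → ℂ)
    (hfint : Integrable f)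
    (hfFint : Integrable (fun x : ℝ => ∫ t : ℝ, Complex.exp (-(Complex.I * x * t)) * f t))
    (hf0 : ∀ t : ℝ, t < 0 → f t = 0)
    (hfcont : ContinuousOn f (Ioi 0))
    (hflim : Tendsto f atTop (nhds 0))
    (hgcont : ContinuousOn g (Ioi 0))
    (hglim : Tendsto g atTop (nhds 0))
    (hgint : ∀ s : ℝ, 0 < s →
      IntegrableOn (fun t : ℝ => Complex.exp (-(s * t : ℝ)) * g t) (Ioi 0))
    (heq : ∀ s : ℝ, 0 < s →
      (∫ t in Ioi (0:ℝ), Complex.exp (-(s * t : ℝ)) * f t)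
        = ∫ t in Ioi (0:ℝ), Complex.exp (-(s * t : ℝ)) * g t) :
    ∀ t : ℝ, 0 < t → f t = g t :=
  stmt_15_general f g hfint hfcont hgcont hgint heq
end
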